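/- arXiv:2411.07214 — 2 statements merged into one kernel-verified Lean document; each statement's English description precedes it below -/
import Mathlib

section
/- Let H be a finite hypergraph with unified matrix U(H). Then the sum of the squares of the eigenvalues of U(H) equals 2·Σ_{e ∈ E*(H)} m(e)²·|τ(e)| + Σ_{{v} ∈ E*(H)} m({v})², where the first sum ranges over the distinct edges of H and the second over the distinct loops of H. -/
variable {V : Type} [Fintype V] [DecidableEq V]

/-- A finite hypergraph: a finite vertex set and a multiset of nonempty edges. -/
structure Hypergraph' (V : Type) [Fintype V] [DecidableEq V] where
  verts : Finset V
  edges : Multiset (Finset V)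
  edges_sub : ∀ e ∈ edges, e ⊆ verts
  edges_nonempty : ∀ e ∈ edges, e.Nonempty

open Classical in
/-- `IH H` is `I(H)`: all parts of 2-partitions of edges plus all singletons of `V(H)`. -/
noncomputable def IH (H : Hypergraph' V) : Finset (Finset V) :=
  Finset.univ.filter fun S =>
    (S.Nonempty ∧ ∃ e ∈ H.edges, S ⊂ e) ∨ ∃ v ∈ H.verts, S = {v}

/-- The unified matrix of a hypergraph, indexed by `I(H)`. -/
noncomputable def U (H : Hypergraph' V) : Matrix ↥(IH H) ↥(IH H) ℝ := fun S T =>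
  if (S : Finset V) = (T : Finset V) then
    (if (S : Finset V).card = 1 then (H.edges.count (S : Finset V) : ℝ) else 0)
  else if Disjoint (S : Finset V) (T : Finset V) then
    (H.edges.count ((S : Finset V) ∪ (T : Finset V)) : ℝ)
  else 0

/-- Degree of a vertex: number of edges (with multiplicity) containing it. -/
def deg (H : Hypergraph' V) (v : V) : ℕ := (H.edges.filter (fun e => v ∈ e)).card

/-- Unified degree of a set `S`: number of edges (with multiplicity) containing `S`. -/
def udeg (H : Hypergraph' V) (S : Finset V) : ℕ := (H.edges.filter (fun e => S ⊆ e)).card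

/-- `incl H` = ∂(H): number of edges of cardinality ≥ 2 properly contained in another edge. -/
noncomputable def incl (H : Hypergraph' V) : ℕ :=
  Multiset.card (H.edges.filter (fun e => 2 ≤ e.card ∧ ∃ e' ∈ H.edges, e ⊂ e'))

/-- A hypergraph is simple if it has no multiple edges and no loops. -/
def Simple (H : Hypergraph' V) : Prop :=
  H.edges.Nodup ∧ ∀ e ∈ H.edges, 2 ≤ e.card

/-- `tau S` = τ(S): the set of unordered 2-partitions of `S`. -/
def tau (S : Finset V) : Finset (Finset (Finset V)) :=
  (S.powerset.filter fun A => A.Nonempty ∧ A ⊂ S).image fun A => {A, S \ A}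

/-!
`U(H)` is real symmetric, so the sum of its squared eigenvalues is `tr(U²) = ∑_{S,T} U_{ST}²`.
The diagonal contributes `m({v})²` for each loop `{v}`. Off the diagonal, the nonzero entries
sit exactly at the ordered pairs `(A, e \ A)` with `A` a nonempty proper subset of an edge `e`;
every edge has `2|τ(e)|` such pairs, since each 2-partition `{A, e \ A}` is counted twice.
-/

namespace Matrix

variable {n 𝕜 R : Type*} [Fintype n]

theorem IsHermitian.trace_mul_self_eq_sum_sq_eigenvalues [DecidableEq n] [RCLike 𝕜]
    {A : Matrix n n 𝕜} (hA : A.IsHermitian) :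
    (A * A).trace = ∑ i, (hA.eigenvalues i : 𝕜) ^ 2 := by
  conv_lhs => rw [hA.spectral_theorem, ← map_mul, Unitary.conjStarAlgAut_apply, trace_mul_cycle,
    Unitary.coe_star_mul_self, one_mul, diagonal_mul_diagonal, trace_diagonal]
  simp [sq]

theorem IsSymm.trace_mul_self [CommSemiring R] {A : Matrix n n R} (hA : A.IsSymm) :
    (A * A).trace = ∑ i, ∑ j, A i j ^ 2 := by
  simp only [trace, diag_apply, mul_apply, sq]
  exact Finset.sum_congr rfl fun i _ => Finset.sum_congr rfl fun j _ => by rw [hA.apply i j]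

end Matrix

namespace Finset

variable {α : Type*} [DecidableEq α] {A e : Finset α}

def properParts (e : Finset α) : Finset (Finset α) :=
  e.powerset.filter fun A => A.Nonempty ∧ A ⊂ e

theorem mem_properParts : A ∈ e.properParts ↔ A.Nonempty ∧ A ⊂ e := by
  simp only [properParts, mem_filter, mem_powerset, and_iff_right_iff_imp]
  exact fun h => h.2.subset

theorem sdiff_mem_properParts (hA : A ∈ e.properParts) : e \ A ∈ e.properParts := by
  obtain ⟨hne, hss⟩ := mem_properParts.1 hA
  exact mem_properParts.2 ⟨sdiff_nonempty.2 hss.not_subset, sdiff_ssubset hss.subset hne⟩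

theorem ne_sdiff_of_mem_properParts (hA : A ∈ e.properParts) : A ≠ e \ A := by
  intro h
  have hdisj : Disjoint A (e \ A) := disjoint_sdiff
  rw [← h, disjoint_self] at hdisj
  exact (mem_properParts.1 hA).1.ne_empty hdisj

end Finset

open Finset

theorem card_properParts_eq_two_mul_card_tau {α : Type} [DecidableEq α] (e : Finset α) :
    #e.properParts = 2 * #(tau e) := by
  change _ = 2 * #(e.properParts.image fun A => ({A, e \ A} : Finset (Finset α)))
  rw [card_eq_sum_card_image (fun A => ({A, e \ A} : Finset (Finset α))) e.properParts,
    mul_comm, ← smul_eq_mul, ← sum_const]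
  refine sum_congr rfl fun P hP => ?_
  obtain ⟨A, hA, rfl⟩ := mem_image.1 hP
  have hfibre : {B ∈ e.properParts | ({B, e \ B} : Finset (Finset α)) = {A, e \ A}} =
      {A, e \ A} := by
    ext B
    simp only [mem_filter, mem_insert, mem_singleton]
    constructor
    · rintro ⟨-, hB⟩
      have hBmem : B ∈ ({A, e \ A} : Finset (Finset α)) := hB ▸ mem_insert_self B {e \ B}
      simpa using hBmem
    · rintro (rfl | rfl)
      · exact ⟨hA, rfl⟩
      · rw [Finset.sdiff_sdiff_eq_self (mem_properParts.1 hA).2.subset, pair_comm]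
        exact ⟨sdiff_mem_properParts hA, rfl⟩
  rw [hfibre, card_pair (ne_sdiff_of_mem_properParts hA)]

namespace Hypergraph'

variable (H : Hypergraph' V)

-- The entries of `U H` (definitionally), extended to all pairs of subsets of `V`.
noncomputable def unifiedEntry (S T : Finset V) : ℝ :=
  if S = T then (if S.card = 1 then (H.edges.count S : ℝ) else 0)
  else if Disjoint S T then (H.edges.count (S ∪ T) : ℝ) else 0

variable {H}

theorem nonempty_of_mem_IH {S : Finset V} (hS : S ∈ IH H) : S.Nonempty := by
  simp only [IH, mem_filter, mem_univ, true_and] at hS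
  rcases hS with ⟨hne, -⟩ | ⟨v, -, rfl⟩
  · exact hne
  · exact singleton_nonempty v

theorem mem_IH_of_mem_properParts {e A : Finset V} (he : e ∈ H.edges)
    (hA : A ∈ e.properParts) : A ∈ IH H := by
  simp only [IH, mem_filter, mem_univ, true_and]
  exact Or.inl ⟨(mem_properParts.1 hA).1, e, he, (mem_properParts.1 hA).2⟩

theorem mem_IH_of_card_eq_one {e : Finset V} (he : e ∈ H.edges) (h1 : #e = 1) : e ∈ IH H := by
  obtain ⟨v, rfl⟩ := card_eq_one.1 h1
  simp only [IH, mem_filter, mem_univ, true_and]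
  exact Or.inr ⟨v, H.edges_sub _ he (mem_singleton_self v), rfl⟩

theorem unifiedEntry_sdiff {e A : Finset V} (hA : A ∈ e.properParts) :
    H.unifiedEntry A (e \ A) = H.edges.count e := by
  rw [unifiedEntry, if_neg (ne_sdiff_of_mem_properParts hA), if_pos disjoint_sdiff,
    union_sdiff_of_subset (mem_properParts.1 hA).2.subset]

theorem disjoint_and_union_mem_edges_of_unifiedEntry_ne_zero {S T : Finset V} (hST : S ≠ T)
    (h : H.unifiedEntry S T ≠ 0) : Disjoint S T ∧ S ∪ T ∈ H.edges := by
  rw [unifiedEntry, if_neg hST] at h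
  split_ifs at h with hdisj
  · exact ⟨hdisj, Multiset.count_ne_zero.1 (Nat.cast_ne_zero.1 h)⟩
  · exact absurd rfl h

theorem sum_unifiedEntry_diag_sq :
    ∑ S ∈ IH H, H.unifiedEntry S S ^ 2 =
      ∑ e ∈ H.edges.toFinset.filter (fun e => e.card = 1), (H.edges.count e : ℝ) ^ 2 := by
  have hdiag (S : Finset V) :
      H.unifiedEntry S S ^ 2 = if #S = 1 then (H.edges.count S : ℝ) ^ 2 else 0 := by
    simp only [unifiedEntry, if_true]
    split_ifs <;> simp
  have hloops : H.edges.toFinset.filter (fun e => e.card = 1) ⊆ IH H := fun e he => by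
    simp only [mem_filter, Multiset.mem_toFinset] at he
    exact mem_IH_of_card_eq_one he.1 he.2
  rw [← sum_subset hloops (f := fun S => H.unifiedEntry S S ^ 2) fun S _ hS => ?_]
  · exact sum_congr rfl fun e he => by rw [hdiag, if_pos (mem_filter.1 he).2]
  · simp only [mem_filter, Multiset.mem_toFinset, not_and] at hS
    rw [hdiag]
    split_ifs with h1
    · rw [Multiset.count_eq_zero_of_notMem fun he => hS he h1]
      simp
    · rfl

theorem sum_unifiedEntry_offDiag_sq :
    ∑ p ∈ (IH H).offDiag, H.unifiedEntry p.1 p.2 ^ 2 =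
      ∑ e ∈ H.edges.toFinset, (#e.properParts : ℝ) * (H.edges.count e : ℝ) ^ 2 := by
  have hsigma : ∑ x ∈ H.edges.toFinset.sigma properParts, (H.edges.count x.1 : ℝ) ^ 2 =
      ∑ e ∈ H.edges.toFinset, (#e.properParts : ℝ) * (H.edges.count e : ℝ) ^ 2 := by
    simp only [sum_sigma, sum_const, nsmul_eq_mul]
  rw [← hsigma]
  symm
  refine sum_bij_ne_zero (fun x _ _ => (x.2, x.1 \ x.2)) ?_ ?_ ?_ ?_
  · rintro ⟨e, A⟩ hx -
    simp only [mem_sigma, Multiset.mem_toFinset] at hx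
    exact mem_offDiag.2 ⟨mem_IH_of_mem_properParts hx.1 hx.2,
      mem_IH_of_mem_properParts hx.1 (sdiff_mem_properParts hx.2),
      ne_sdiff_of_mem_properParts hx.2⟩
  · rintro ⟨e, A⟩ hx - ⟨e', A'⟩ hx' - h
    simp only [mem_sigma, Prod.mk.injEq] at hx hx' h
    obtain ⟨rfl, h⟩ := h
    rw [← union_sdiff_of_subset (mem_properParts.1 hx.2).2.subset, h,
      union_sdiff_of_subset (mem_properParts.1 hx'.2).2.subset]
  · rintro ⟨S, T⟩ hST hne
    obtain ⟨hS, hT, hST⟩ := mem_offDiag.1 hST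
    obtain ⟨hdisj, hedge⟩ := disjoint_and_union_mem_edges_of_unifiedEntry_ne_zero hST
      (pow_ne_zero_iff two_ne_zero |>.1 hne)
    have hproper : S ∈ (S ∪ T).properParts := by
      refine mem_properParts.2 ⟨nonempty_of_mem_IH hS, left_lt_sup.2 fun hTS => ?_⟩
      obtain ⟨t, ht⟩ := nonempty_of_mem_IH hT
      exact disjoint_left.1 hdisj (hTS ht) ht
    refine ⟨⟨S ∪ T, S⟩, mem_sigma.2 ⟨Multiset.mem_toFinset.2 hedge, hproper⟩, ?_, ?_⟩
    · exact pow_ne_zero 2 (Nat.cast_ne_zero.2 (Multiset.count_ne_zero.2 hedge))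
    · rw [union_sdiff_cancel_left hdisj]
  · rintro ⟨e, A⟩ hx -
    simp only [mem_sigma] at hx
    rw [unifiedEntry_sdiff hx.2]

theorem trace_U_mul_self (hU : (U H).IsSymm) :
    (U H * U H).trace = ∑ S ∈ IH H, H.unifiedEntry S S ^ 2 +
      ∑ p ∈ (IH H).offDiag, H.unifiedEntry p.1 p.2 ^ 2 := by
  calc (U H * U H).trace = ∑ S ∈ IH H, ∑ T ∈ IH H, H.unifiedEntry S T ^ 2 := by
        rw [hU.trace_mul_self, ← sum_coe_sort (IH H)]
        exact sum_congr rfl fun S _ => sum_coe_sort (IH H) (H.unifiedEntry S · ^ 2)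
    _ = ∑ p ∈ (IH H).diag ∪ (IH H).offDiag, H.unifiedEntry p.1 p.2 ^ 2 := by
        rw [diag_union_offDiag, sum_product' (f := fun S T => H.unifiedEntry S T ^ 2)]
    _ = _ := by rw [sum_union (disjoint_diag_offDiag _), sum_diag]

end Hypergraph'

theorem sum_sq_eigenvalues (H : Hypergraph' V) (hU : (U H).IsHermitian) :
    ∑ i, (hU.eigenvalues i) ^ 2 =
      2 * (∑ e ∈ H.edges.toFinset, (H.edges.count e : ℝ) ^ 2 * ((tau e).card : ℝ)) +
      ∑ e ∈ H.edges.toFinset.filter (fun e => e.card = 1), (H.edges.count e : ℝ) ^ 2 := by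
  have hsymm : (U H).IsSymm := (Matrix.conjTranspose_eq_transpose_of_trivial _).symm.trans hU
  have htrace := hU.trace_mul_self_eq_sum_sq_eigenvalues
  simp only [RCLike.ofReal_real_eq_id, id] at htrace
  rw [← htrace, Hypergraph'.trace_U_mul_self hsymm, Hypergraph'.sum_unifiedEntry_diag_sq,
    Hypergraph'.sum_unifiedEntry_offDiag_sq, mul_sum, add_comm]
  congr 1
  refine sum_congr rfl fun e _ => ?_
  rw [card_properParts_eq_two_mul_card_tau]
  push_cast
  ring
end

section
/- Let H be a simple hypergraph with e-index k and characteristic polynomial of U(H) equal to x^k + c_1 x^{k-1} + ... + c_k. Then c_2 = (1/2)·(∂(H) − Σ_{S ∈ I(H)} d_H(S)), i.e., the sum of all 2×2 principal minors of U(H) equals this quantity. -/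
variable {V : Type} [Fintype V] [DecidableEq V]

/-! By the principal-minor expansion of the characteristic polynomial, `2 c₂ = (tr U)² - tr (U²)`.
For a simple hypergraph `U` is a symmetric `0/1` matrix with zero diagonal, so
`2 c₂ = -#{(S, T) ∈ I(H)² | S, T disjoint, S ∪ T ∈ E(H)}`. An edge `e` is hit by exactly the pairs
`(S, e \ S)` with `∅ ≠ S ⊂ e`, all of which lie in `I(H)`. Counting `∑_{S ∈ I(H)} d_H(S)` edge by
edge gives the same number plus one for each edge lying in `I(H)`, i.e. properly contained in
another edge, and there are `∂(H)` of those. -/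

open Finset Matrix

theorem Finset.sum_offDiag_pair_eq_two_nsmul {α M : Type*} [DecidableEq α] [AddCommMonoid M]
    (s : Finset α) (f : Finset α → M) :
    ∑ p ∈ s.offDiag, f {p.1, p.2} = 2 • ∑ t ∈ s.powersetCard 2, f t := by
  rw [← sum_fiberwise_of_maps_to (g := fun p : α × α => ({p.1, p.2} : Finset α))
    (t := s.powersetCard 2), smul_sum]
  · refine sum_congr rfl fun t ht => ?_
    obtain ⟨hts, htcard⟩ := mem_powersetCard.mp ht
    have hfiber : {p ∈ s.offDiag | ({p.1, p.2} : Finset α) = t} = t.offDiag := by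
      ext ⟨i, j⟩
      simp only [mem_filter, mem_offDiag]
      constructor
      · rintro ⟨⟨-, -, hij⟩, rfl⟩
        simp [hij]
      · rintro ⟨hi, hj, hij⟩
        refine ⟨⟨hts hi, hts hj, hij⟩, eq_of_subset_of_card_le ?_ ?_⟩
        · simp [insert_subset_iff, hi, hj]
        · rw [htcard, card_pair hij]
    rw [sum_congr rfl fun p hp => congrArg f (mem_filter.mp hp).2, sum_const, hfiber,
      offDiag_card, htcard]
  · intro p hp
    obtain ⟨hi, hj, hij⟩ := mem_offDiag.mp hp
    simp [mem_powersetCard, insert_subset_iff, hi, hj, card_pair hij]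

namespace Matrix

variable {n R : Type*} [DecidableEq n] [CommRing R]

theorem det_submatrix_pair (A : Matrix n n R) {i j : n} (hij : i ≠ j) :
    (A.submatrix (Subtype.val : ({i, j} : Finset n) → n) Subtype.val).det =
      A i i * A j j - A i j * A j i := by
  let e : Fin 2 → ({i, j} : Finset n) := ![⟨i, by simp⟩, ⟨j, by simp⟩]
  have he : Function.Bijective e := by
    rw [Fintype.bijective_iff_injective_and_card, Fintype.card_coe, card_pair hij]
    refine ⟨fun a b hab => ?_, by simp⟩
    fin_cases a <;> fin_cases b <;> simp_all [e, Subtype.ext_iff, hij.symm]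
  rw [← det_submatrix_equiv_self (Equiv.ofBijective e he), det_fin_two]
  simp [e]

variable [Fintype n]

theorem sum_offDiag_principal_minor_two (A : Matrix n n R) :
    ∑ p ∈ (univ : Finset n).offDiag, (A p.1 p.1 * A p.2 p.2 - A p.1 p.2 * A p.2 p.1) =
      A.trace ^ 2 - (A * A).trace := by
  have hsplit : ∀ f : n × n → R,
      ∑ p ∈ (univ : Finset n).offDiag, f p = ∑ i, ∑ j, f (i, j) - ∑ i, f (i, i) := by
    intro f
    rw [eq_sub_iff_add_eq', ← sum_diag, ← sum_union (disjoint_diag_offDiag _),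
      diag_union_offDiag, sum_product]
  rw [hsplit, sq, trace, sum_mul_sum, trace]
  simp only [diag_apply, mul_apply, sum_sub_distrib]
  ring

theorem two_mul_charpoly_coeff_card_sub_two (A : Matrix n n R) (hn : 2 ≤ Fintype.card n) :
    2 * A.charpoly.coeff (Fintype.card n - 2) = A.trace ^ 2 - (A * A).trace := by
  rw [charpoly_coeff_eq_sum_minors A 2 hn, ← sum_offDiag_principal_minor_two,
    ← sum_congr rfl fun p hp => det_submatrix_pair A (mem_offDiag.mp hp).2.2,
    sum_offDiag_pair_eq_two_nsmul univ fun s => (A.submatrix (Subtype.val : s → n) Subtype.val).det]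
  simp

theorem two_mul_charpoly_coeff_card_sub_two_of_diag_eq_zero (A : Matrix n n R)
    [Nonempty n] (hA : ∀ i, A i i = 0) :
    2 * A.charpoly.coeff (Fintype.card n - 2) = -(A * A).trace := by
  have htrace : A.trace = 0 := sum_eq_zero fun i _ => hA i
  rcases (Nat.one_le_iff_ne_zero.mpr Fintype.card_ne_zero : 1 ≤ Fintype.card n).eq_or_lt with
    hone | htwo
  · -- here `card n - 2 = card n - 1`, the index of the trace coefficient
    have : Subsingleton n := Fintype.card_le_one_iff_subsingleton.mp hone.ge
    have hsq : (A * A).trace = 0 :=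
      sum_eq_zero fun i _ => sum_eq_zero fun j _ => by simp [Subsingleton.elim j i, hA]
    have hcoeff : A.charpoly.coeff (Fintype.card n - 2) = 0 := by
      have h := trace_eq_neg_charpoly_coeff A
      rw [← hone] at h ⊢
      simpa [htrace] using h.symm
    rw [hcoeff, hsq, mul_zero, neg_zero]
  · rw [two_mul_charpoly_coeff_card_sub_two A htwo, htrace]
    ring

end Matrix

section

variable {H : Hypergraph' V}

theorem mem_IH {S : Finset V} :
    S ∈ IH H ↔ (S.Nonempty ∧ ∃ e ∈ H.edges, S ⊂ e) ∨ ∃ v ∈ H.verts, S = {v} := by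
  simp [IH]

theorem nonempty_of_mem_IH {S : Finset V} (hS : S ∈ IH H) : S.Nonempty := by
  rcases mem_IH.mp hS with ⟨hne, -⟩ | ⟨v, -, rfl⟩
  · exact hne
  · exact singleton_nonempty v

theorem Simple.mem_IH_iff {e : Finset V} (hs : Simple H) (he : e ∈ H.edges) :
    e ∈ IH H ↔ ∃ e' ∈ H.edges, e ⊂ e' := by
  refine mem_IH.trans ⟨?_, fun h => Or.inl ⟨H.edges_nonempty e he, h⟩⟩
  rintro (⟨-, h⟩ | ⟨v, -, rfl⟩)
  · exact h
  · simpa using hs.2 _ he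

theorem Simple.U_apply (hs : Simple H) (S T : IH H) :
    U H S T = if Disjoint (S : Finset V) T ∧ (S : Finset V) ∪ T ∈ H.edges then 1 else 0 := by
  by_cases hST : (S : Finset V) = T
  · have hnot : ¬ Disjoint (S : Finset V) T := by
      rw [← hST, disjoint_self]
      exact (nonempty_of_mem_IH S.2).ne_empty
    simp only [U, if_pos hST, if_neg (not_and_of_not_left _ hnot)]
    split_ifs with hcard
    · exact_mod_cast Multiset.count_eq_zero.mpr fun hmem => by
        have := hs.2 _ hmem
        omega
    · rfl
  · simp only [U, if_neg hST, Multiset.count_eq_of_nodup hs.1]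
    split_ifs <;> simp_all

theorem Simple.U_apply_self (hs : Simple H) (S : IH H) : U H S S = 0 := by
  simp [hs.U_apply, (nonempty_of_mem_IH S.2).ne_empty]

theorem Simple.trace_U_mul_U (hs : Simple H) :
    (U H * U H).trace = #{p ∈ IH H ×ˢ IH H | Disjoint p.1 p.2 ∧ p.1 ∪ p.2 ∈ H.edges} := by
  have hsq : ∀ S T : IH H, U H S T * U H T S =
      if Disjoint (S : Finset V) T ∧ (S : Finset V) ∪ T ∈ H.edges then 1 else 0 := by
    intro S T
    rw [hs.U_apply, hs.U_apply]
    simp only [disjoint_comm (a := (T : Finset V)), union_comm (T : Finset V)]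
    split_ifs <;> simp
  simp only [trace, diag_apply, mul_apply, hsq]
  rw [sum_coe_sort (IH H) fun S => ∑ T : IH H,
      if Disjoint S (T : Finset V) ∧ S ∪ T ∈ H.edges then (1 : ℝ) else 0,
    sum_congr rfl fun S _ => sum_coe_sort (IH H) fun T =>
      if Disjoint S T ∧ S ∪ T ∈ H.edges then (1 : ℝ) else 0, ← sum_product', sum_boole]

theorem card_filter_disjoint_union_eq {e : Finset V} (he : e ∈ H.edges) :
    #{p ∈ IH H ×ˢ IH H | Disjoint p.1 p.2 ∧ p.1 ∪ p.2 = e} = #{S ∈ IH H | S ⊂ e} := by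
  refine card_nbij' Prod.fst (fun S => (S, e \ S)) ?_ ?_ ?_ (fun _ _ => rfl)
  · rintro ⟨S, T⟩ hST
    simp only [mem_coe, mem_filter, mem_product] at hST ⊢
    obtain ⟨⟨hS, hT⟩, hdisj, rfl⟩ := hST
    refine ⟨hS, subset_union_left.ssubset_of_ne fun h => ?_⟩
    obtain ⟨x, hx⟩ := nonempty_of_mem_IH hT
    exact disjoint_right.mp hdisj hx (h ▸ mem_union_right S hx)
  · intro S hS
    simp only [mem_coe, mem_filter, mem_product] at hS ⊢
    have hdiff : e \ S ∈ IH H := mem_IH.mpr <| Or.inl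
      ⟨sdiff_nonempty.mpr (not_subset_of_ssubset hS.2), e, he,
        sdiff_ssubset hS.2.subset (nonempty_of_mem_IH hS.1)⟩
    exact ⟨⟨hS.1, hdiff⟩, disjoint_sdiff, union_sdiff_of_subset hS.2.subset⟩
  · rintro ⟨S, T⟩ hST
    simp only [mem_coe, mem_filter, mem_product] at hST
    obtain ⟨-, hdisj, rfl⟩ := hST
    simp [union_sdiff_cancel_left hdisj]

theorem Simple.udeg_eq (hs : Simple H) (S : Finset V) :
    udeg H S = #{e ∈ H.edges.toFinset | S ⊆ e} := by
  rw [udeg, ← Multiset.toFinset_card_of_nodup (hs.1.filter _), Multiset.toFinset_filter]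

theorem Simple.incl_eq (hs : Simple H) :
    incl H = #{e ∈ H.edges.toFinset | e ∈ IH H} := by
  rw [incl, ← Multiset.toFinset_card_of_nodup (hs.1.filter _), Multiset.toFinset_filter]
  refine congrArg card (filter_congr fun e he => ?_)
  rw [Multiset.mem_toFinset] at he
  simp [hs.2 e he, hs.mem_IH_iff he]

theorem card_filter_disjoint_union_mem_edges :
    #{p ∈ IH H ×ˢ IH H | Disjoint p.1 p.2 ∧ p.1 ∪ p.2 ∈ H.edges} =
      ∑ e ∈ H.edges.toFinset, #{S ∈ IH H | S ⊂ e} := by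
  rw [card_eq_sum_card_fiberwise (f := fun p => p.1 ∪ p.2) (t := H.edges.toFinset)]
  · refine sum_congr rfl fun e he => ?_
    rw [filter_filter, ← card_filter_disjoint_union_eq (Multiset.mem_toFinset.mp he)]
    congr 2 with p
    constructor
    · rintro ⟨⟨hdisj, -⟩, hunion⟩
      exact ⟨hdisj, hunion⟩
    · rintro ⟨hdisj, rfl⟩
      exact ⟨⟨hdisj, Multiset.mem_toFinset.mp he⟩, rfl⟩
  · intro p hp
    exact Multiset.mem_toFinset.mpr (mem_filter.mp hp).2.2

theorem card_filter_subset_eq_card_filter_ssubset_add (e : Finset V) :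
    #{S ∈ IH H | S ⊆ e} = #{S ∈ IH H | S ⊂ e} + if e ∈ IH H then 1 else 0 := by
  have hsplit : {S ∈ IH H | S ⊆ e} = {S ∈ IH H | S ⊂ e} ∪ {S ∈ IH H | S = e} := by
    rw [← filter_or]
    exact filter_congr fun S _ => subset_iff_ssubset_or_eq
  rw [hsplit, card_union_of_disjoint (disjoint_filter.mpr fun S _ h h' => h.ne h'), filter_eq']
  split_ifs <;> rfl

theorem Simple.sum_udeg (hs : Simple H) :
    ∑ S ∈ IH H, udeg H S = ∑ e ∈ H.edges.toFinset, #{S ∈ IH H | S ⊂ e} + incl H := by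
  simp only [hs.udeg_eq, hs.incl_eq]
  rw [card_filter (· ∈ IH H), ← sum_add_distrib]
  simp_rw [← card_filter_subset_eq_card_filter_ssubset_add]
  exact sum_card_bipartiteAbove_eq_sum_card_bipartiteBelow (r := fun S e : Finset V => S ⊆ e)

end

theorem charpoly_coeff_two (H : Hypergraph' V) (hs : Simple H) (hV : H.verts.Nonempty) :
    ((U H).charpoly).coeff (Fintype.card ↥(IH H) - 2) =
      (1/2 : ℝ) * ((incl H : ℝ) - ∑ S ∈ IH H, (udeg H S : ℝ)) := by
  obtain ⟨v, hv⟩ := hV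
  have : Nonempty (IH H) := ⟨⟨{v}, mem_IH.mpr (Or.inr ⟨v, hv, rfl⟩)⟩⟩
  have hcoeff := (U H).two_mul_charpoly_coeff_card_sub_two_of_diag_eq_zero hs.U_apply_self
  rw [hs.trace_U_mul_U, card_filter_disjoint_union_mem_edges] at hcoeff
  have hdeg : (∑ S ∈ IH H, udeg H S : ℝ) =
      ∑ e ∈ H.edges.toFinset, (#{S ∈ IH H | S ⊂ e} : ℝ) + incl H :=
    mod_cast hs.sum_udeg
  push_cast at hcoeff
  linarith
end
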